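/- For every ε > 0 and every p ∈ [0,1], one has ω(p,ε) ≤ φ₀(p,ε)·√(ε/2). -/

import Mathlib

open Real

/-- Bernoulli Kullback–Leibler divergence `kl(a‖b)`. -/
noncomputable def klBer (a b : ℝ) : ℝ :=
  a * Real.log (a / b) + (1 - a) * Real.log ((1 - a) / (1 - b))

/-- `ω(p, ε)`. -/
noncomputable def omegaKL (p ε : ℝ) : ℝ :=
  if p = 0 then 0
  else if p ≤ Real.exp (-ε) then
    sInf {η : ℝ | η ∈ Set.Icc 0 (1 - p) ∧ klBer (p + η) p = ε}
  else 1 - p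

/-- `σ(p) = √(p(1-p))`. -/
noncomputable def sigmaB (p : ℝ) : ℝ := Real.sqrt (p * (1 - p))

/-- `ρ_ε = 9/(9+2ε)`. -/
noncomputable def rhoEps (ε : ℝ) : ℝ := 9 / (9 + 2 * ε)

/-- `φ₀(p,ε) = √(4σ(p)²ρ_ε² + σ(ρ_ε)²) + σ(ρ_ε)(1-2p)`. -/
noncomputable def phi0 (p ε : ℝ) : ℝ :=
  Real.sqrt (4 * (sigmaB p) ^ 2 * (rhoEps ε) ^ 2 + (sigmaB (rhoEps ε)) ^ 2)
    + sigmaB (rhoEps ε) * (1 - 2 * p)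

/-! Write `V x = x (1 - x)`. The key estimate is the lower bound
`kl(p + η ‖ p) ≥ η² / (2 V(p + η/3))` for `0 < p`, `0 ≤ η ≤ 1 - p`. Since
`∂²/∂a² kl(a ‖ p) = 1 / V a` is convex, it dominates its tangent at `p + η/3`; integrating twice
from `p`, where `kl` and its derivative vanish, gives the bound, and the tangent point is the
centroid of the weight `(η - s) ds` on `[0, η]`, so the linear part of the tangent integrates to
zero. Hence every `η ∈ [0, 1 - p]` with `kl(p + η ‖ p) ≤ ε` satisfies the quadratic inequality
`η² ≤ 2 ε V(p + η/3)`, whose larger root is `φ₀(p, ε) √(ε/2)`. This applies to every point of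
the set defining `ω(p, ε)`, and to `η = 1 - p` when `p > e^{-ε}`, as `kl(1 ‖ p) = -log p < ε`. -/

open Set

theorem monotoneOn_Icc_of_hasDerivAt_of_second_deriv_nonneg {f f' f'' : ℝ → ℝ} {a b : ℝ}
    (hf : ContinuousOn f (Icc a b)) (hf' : ∀ x ∈ Ioo a b, HasDerivAt f (f' x) x)
    (hf'' : ∀ x ∈ Ico a b, HasDerivAt f' (f'' x) x) (ha : 0 ≤ f' a)
    (hf''_nonneg : ∀ x ∈ Ioo a b, 0 ≤ f'' x) : MonotoneOn f (Icc a b) := by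
  have hmono' : MonotoneOn f' (Ico a b) := by
    refine monotoneOn_of_hasDerivWithinAt_nonneg (convex_Ico a b)
      (fun x hx => (hf'' x hx).continuousAt.continuousWithinAt) ?_ (by rwa [interior_Ico])
    rw [interior_Ico]
    exact fun x hx => (hf'' x (Ioo_subset_Ico_self hx)).hasDerivWithinAt
  refine monotoneOn_of_hasDerivWithinAt_nonneg (f' := f') (convex_Icc a b) hf ?_ ?_ <;>
    rw [interior_Icc]
  · exact fun x hx => (hf' x hx).hasDerivWithinAt
  · intro x hx
    exact ha.trans <| hmono' (left_mem_Ico.2 (hx.1.trans hx.2)) (Ioo_subset_Ico_self hx) hx.1.le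

lemma inv_mul_one_sub_tangent_le {x y : ℝ} (hx0 : 0 < x) (hx1 : x < 1) (hy0 : 0 < y)
    (hy1 : y < 1) :
    (y * (1 - y))⁻¹ + (2 * y - 1) * (y * (1 - y))⁻¹ ^ 2 * (x - y) ≤ x⁻¹ + (1 - x)⁻¹ := by
  have h1x : 0 < 1 - x := by linarith
  have h1y : 0 < 1 - y := by linarith
  rw [← sub_nonneg]
  have h : x⁻¹ + (1 - x)⁻¹ - ((y * (1 - y))⁻¹ + (2 * y - 1) * (y * (1 - y))⁻¹ ^ 2 * (x - y)) =
      (x - y) ^ 2 * ((1 - x) * (1 - y) ^ 2 + x * y ^ 2) / ((x * (1 - x)) * (y * (1 - y)) ^ 2) := by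
    field_simp
    ring
  rw [h]
  positivity

lemma mul_log_div_eq (x : ℝ) {c : ℝ} (hc : c ≠ 0) : x * log (x / c) = x * log x - x * log c := by
  rcases eq_or_ne x 0 with rfl | hx
  · simp
  · rw [log_div hx hc, mul_sub]

lemma continuous_mul_log_div (c : ℝ) : Continuous fun x => x * log (x / c) := by
  rcases eq_or_ne c 0 with rfl | hc
  · simp [continuous_const]
  · simp_rw [mul_log_div_eq _ hc]
    exact continuous_mul_log.sub (continuous_id.mul continuous_const)

lemma hasDerivAt_mul_log_div {x c : ℝ} (hx : x ≠ 0) (hc : c ≠ 0) :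
    HasDerivAt (fun x => x * log (x / c)) (log (x / c) + 1) x := by
  simp_rw [mul_log_div_eq _ hc]
  refine ((hasDerivAt_mul_log hx).sub ((hasDerivAt_id' x).mul_const (log c))).congr_deriv ?_
  rw [log_div hx hc]
  ring

lemma hasDerivAt_log_div {x c : ℝ} (hx : x ≠ 0) (hc : c ≠ 0) :
    HasDerivAt (fun x => log (x / c)) x⁻¹ x := by
  convert ((hasDerivAt_id' x).div_const c).log (div_ne_zero hx hc) using 1
  field_simp

lemma klBer_self (p : ℝ) : klBer p p = 0 := by
  simp [klBer]

lemma klBer_one_left (p : ℝ) : klBer 1 p = -log p := by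
  simp [klBer]

lemma continuous_klBer_left (p : ℝ) : Continuous fun a => klBer a p :=
  (continuous_mul_log_div p).add
    ((continuous_mul_log_div (1 - p)).comp (continuous_const.sub continuous_id))

section Derivatives

variable {a p : ℝ} (ha0 : a ≠ 0) (ha1 : a ≠ 1) (hp0 : p ≠ 0) (hp1 : p ≠ 1)
include ha0 ha1 hp0 hp1

lemma hasDerivAt_klBer_left :
    HasDerivAt (fun a => klBer a p) (log (a / p) - log ((1 - a) / (1 - p))) a := by
  have h1 : HasDerivAt (fun a => (1 - a) * log ((1 - a) / (1 - p)))
      ((log ((1 - a) / (1 - p)) + 1) * (-1)) a :=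
    (hasDerivAt_mul_log_div (sub_ne_zero.2 ha1.symm) (sub_ne_zero.2 hp1.symm)).comp a
      ((hasDerivAt_id a).const_sub 1)
  exact ((hasDerivAt_mul_log_div ha0 hp0).fun_add h1).congr_deriv (by ring)

lemma hasDerivAt_log_div_sub_log_div :
    HasDerivAt (fun a => log (a / p) - log ((1 - a) / (1 - p))) (a⁻¹ + (1 - a)⁻¹) a := by
  have h1 : HasDerivAt (fun a => log ((1 - a) / (1 - p))) ((1 - a)⁻¹ * (-1)) a :=
    (hasDerivAt_log_div (sub_ne_zero.2 ha1.symm) (sub_ne_zero.2 hp1.symm)).comp a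
      ((hasDerivAt_id a).const_sub 1)
  exact ((hasDerivAt_log_div ha0 hp0).fun_sub h1).congr_deriv (by ring)

end Derivatives

theorem sq_le_two_mul_klBer_mul {p η : ℝ} (hp : 0 < p) (hη : 0 ≤ η) (hpη : p + η ≤ 1) :
    η ^ 2 ≤ 2 * klBer (p + η) p * ((p + η / 3) * (1 - (p + η / 3))) := by
  rcases hη.eq_or_lt with rfl | hη
  · simp [klBer_self]
  set m := p + η / 3 with hm
  have hm0 : 0 < m := by positivity
  have hm1 : m < 1 := by linarith
  have hV : 0 < m * (1 - m) := mul_pos hm0 (by linarith)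
  set w₀ := (m * (1 - m))⁻¹
  set w₁ := (2 * m - 1) * w₀ ^ 2
  have hrange : ∀ s ∈ Ico 0 η, p + s ≠ 0 ∧ p + s ≠ 1 := fun s hs =>
    ⟨by linarith [hs.1], by linarith [hs.2]⟩
  have hp1 : p ≠ 1 := by linarith
  -- The comparison function has second derivative `w₀ + w₁ (s - η/3)`, the tangent line of
  -- `x ↦ 1/(x(1-x))` at `m`; centring it at `η/3` makes its cubic part vanish at `η`.
  have hmono := monotoneOn_Icc_of_hasDerivAt_of_second_deriv_nonneg
    (f := fun s => klBer (p + s) p - (w₀ * s ^ 2 / 2 + w₁ * s ^ 2 * (s - η) / 6))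
    (f' := fun s => (log ((p + s) / p) - log ((1 - (p + s)) / (1 - p)))
      - (w₀ * s + w₁ * (s ^ 2 / 2 - η / 3 * s)))
    (f'' := fun s => ((p + s)⁻¹ + (1 - (p + s))⁻¹) - (w₀ + w₁ * (s - η / 3)))
    (a := 0) (b := η) ?cont ?deriv ?deriv2 ?start ?convex
  case cont =>
    exact (((continuous_klBer_left p).comp (continuous_const.add continuous_id)).sub
      (by fun_prop)).continuousOn
  case deriv =>
    intro s hs
    have hQ : HasDerivAt (fun s => w₀ * s ^ 2 / 2 + w₁ * s ^ 2 * (s - η) / 6)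
        (w₀ * s + w₁ * (s ^ 2 / 2 - η / 3 * s)) s := by
      have := (((hasDerivAt_pow 2 s).const_mul w₀).div_const 2).add
        ((((hasDerivAt_pow 2 s).const_mul w₁).mul ((hasDerivAt_id' s).sub_const η)).div_const 6)
      exact this.congr_deriv (by push_cast; ring)
    exact (HasDerivAt.comp_const_add p s
      (hasDerivAt_klBer_left (hrange s (Ioo_subset_Ico_self hs)).1
        (hrange s (Ioo_subset_Ico_self hs)).2 hp.ne' hp1)).sub hQ
  case deriv2 =>
    intro s hs
    have hQ : HasDerivAt (fun s => w₀ * s + w₁ * (s ^ 2 / 2 - η / 3 * s))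
        (w₀ + w₁ * (s - η / 3)) s := by
      have := ((hasDerivAt_id' s).const_mul w₀).add
        ((((hasDerivAt_pow 2 s).div_const 2).sub
          ((hasDerivAt_id' s).const_mul (η / 3))).const_mul w₁)
      exact this.congr_deriv (by push_cast; ring)
    exact (HasDerivAt.comp_const_add p s
      (hasDerivAt_log_div_sub_log_div (hrange s hs).1 (hrange s hs).2 hp.ne' hp1)).sub hQ
  case start => simp [div_self hp.ne', div_self (sub_ne_zero.2 hp1.symm)]
  case convex =>
    intro s hs
    rw [sub_nonneg]
    convert inv_mul_one_sub_tangent_le (x := p + s) (y := m) (by linarith [hs.1])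
      (by linarith [hs.2]) hm0 hm1 using 2
    ring
  have key := hmono (left_mem_Icc.2 hη.le) (right_mem_Icc.2 hη.le) hη.le
  simp only [add_zero, klBer_self, sub_self] at key
  rw [← div_le_iff₀ hV, div_eq_inv_mul]
  linarith

lemma le_add_sqrt_of_sq_le {x β d : ℝ} (h : x ^ 2 ≤ 2 * β * x + d) : x ≤ β + √(β ^ 2 + d) := by
  have := abs_le_sqrt (x := x - β) (y := β ^ 2 + d) (by linear_combination h)
  linarith [le_abs_self (x - β)]

lemma add_sqrt_sq_add_nonneg (β : ℝ) {d : ℝ} (hd : 0 ≤ d) : 0 ≤ β + √(β ^ 2 + d) := by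
  have := abs_le_sqrt (x := β) (y := β ^ 2 + d) (by linarith)
  linarith [neg_abs_le β]

section Phi0

variable {ε : ℝ} (hε : 0 ≤ ε)
include hε

lemma rhoEps_nonneg : 0 ≤ rhoEps ε := by
  unfold rhoEps
  positivity

lemma one_sub_rhoEps : 1 - rhoEps ε = 2 * ε * rhoEps ε / 9 := by
  unfold rhoEps
  field_simp
  ring

lemma rhoEps_mul_one_sub_nonneg : 0 ≤ rhoEps ε * (1 - rhoEps ε) := by
  have := rhoEps_nonneg hε
  rw [one_sub_rhoEps hε]
  positivity

lemma sigmaB_rhoEps_mul_sqrt : sigmaB (rhoEps ε) * √(ε / 2) = ε * rhoEps ε / 3 := by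
  have hr0 := rhoEps_nonneg hε
  rw [sigmaB, ← sqrt_mul (rhoEps_mul_one_sub_nonneg hε), one_sub_rhoEps hε,
    show rhoEps ε * (2 * ε * rhoEps ε / 9) * (ε / 2) = (ε * rhoEps ε / 3) ^ 2 by ring]
  exact sqrt_sq (by positivity)

lemma phi0_mul_sqrt_eq {p : ℝ} (hp : p ∈ Icc 0 1) :
    phi0 p ε * √(ε / 2) = ε * rhoEps ε * (1 - 2 * p) / 3
      + √((ε * rhoEps ε * (1 - 2 * p) / 3) ^ 2 + 2 * ε * rhoEps ε * (p * (1 - p))) := by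
  have hσp : sigmaB p ^ 2 = p * (1 - p) := sq_sqrt (mul_nonneg hp.1 (by linarith [hp.2]))
  have hσr : sigmaB (rhoEps ε) ^ 2 = rhoEps ε * (1 - rhoEps ε) :=
    sq_sqrt (rhoEps_mul_one_sub_nonneg hε)
  rw [phi0, add_mul, mul_right_comm (sigmaB _), sigmaB_rhoEps_mul_sqrt hε,
    ← sqrt_mul (by positivity), hσp, hσr, add_comm]
  congr 1
  · ring
  · congr 1
    linear_combination (ε * rhoEps ε / 2 - 2 * ε * rhoEps ε * (p * (1 - p))) * one_sub_rhoEps hε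

lemma le_phi0_mul_sqrt_of_sq_le {p η : ℝ} (hp : p ∈ Icc 0 1)
    (h : η ^ 2 ≤ 2 * ε * ((p + η / 3) * (1 - (p + η / 3)))) : η ≤ phi0 p ε * √(ε / 2) := by
  have hr0 := rhoEps_nonneg hε
  rw [phi0_mul_sqrt_eq hε hp]
  apply le_add_sqrt_of_sq_le
  linear_combination rhoEps ε * h + η ^ 2 * one_sub_rhoEps hε

lemma phi0_mul_sqrt_nonneg {p : ℝ} (hp : p ∈ Icc 0 1) : 0 ≤ phi0 p ε * √(ε / 2) := by
  have hr0 := rhoEps_nonneg hε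
  have hp1 : 0 ≤ 1 - p := sub_nonneg.2 hp.2
  rw [phi0_mul_sqrt_eq hε hp]
  exact add_sqrt_sq_add_nonneg _ (by have := hp.1; positivity)

end Phi0

lemma le_phi0_mul_sqrt_of_klBer_le {ε p η : ℝ} (hε : 0 ≤ ε) (hp : 0 < p) (hη : 0 ≤ η)
    (hpη : p + η ≤ 1) (hkl : klBer (p + η) p ≤ ε) : η ≤ phi0 p ε * √(ε / 2) := by
  have hV : 0 ≤ (p + η / 3) * (1 - (p + η / 3)) := mul_nonneg (by positivity) (by linarith)
  refine le_phi0_mul_sqrt_of_sq_le hε ⟨hp.le, by linarith⟩ ?_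
  calc η ^ 2 ≤ 2 * klBer (p + η) p * ((p + η / 3) * (1 - (p + η / 3))) :=
        sq_le_two_mul_klBer_mul hp hη hpη
    _ ≤ 2 * ε * ((p + η / 3) * (1 - (p + η / 3))) := by gcongr

/-- For every `ε > 0` and `p ∈ [0,1]`, `ω(p,ε) ≤ φ₀(p,ε) √(ε/2)`. -/
theorem omegaKL_le_phi0 (ε : ℝ) (hε : 0 < ε) (p : ℝ) (hp : p ∈ Set.Icc (0 : ℝ) 1) :
    omegaKL p ε ≤ phi0 p ε * Real.sqrt (ε / 2) := by
  have hB := phi0_mul_sqrt_nonneg hε.le hp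
  unfold omegaKL
  split_ifs with hp0 hpε
  · exact hB
  · have hpos : 0 < p := lt_of_le_of_ne hp.1 (Ne.symm hp0)
    rcases eq_empty_or_nonempty {η | η ∈ Icc 0 (1 - p) ∧ klBer (p + η) p = ε} with hS | hS
    · rw [hS, Real.sInf_empty]
      exact hB
    · obtain ⟨η, ⟨hη0, hη1⟩, hkl⟩ := hS
      exact csInf_le_of_le ⟨0, fun x hx => hx.1.1⟩ ⟨⟨hη0, hη1⟩, hkl⟩
        (le_phi0_mul_sqrt_of_klBer_le hε.le hpos hη0 (by linarith) hkl.le)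
  · have hpos : 0 < p := (exp_pos _).trans (not_le.1 hpε)
    have hlog : -ε < log p := (lt_log_iff_exp_lt hpos).2 (not_le.1 hpε)
    refine le_phi0_mul_sqrt_of_klBer_le hε.le hpos (by linarith [hp.2]) (by linarith) ?_
    rw [add_sub_cancel, klBer_one_left]
    linarith
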